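/- Let S = ⟨qm₁,…,qm_d, pn₁,…,pn_k⟩ be a specific gluing of S₁ and S₂. Then ord_S(s + qm₁) = ord_S(s) + 1 for all s∈S if and only if ord_{S₁}(s + m₁) = ord_{S₁}(s) + 1 for all s∈S₁; equivalently (by García's criterion, since m(S) = qm₁ and m(S₁) = m₁), the tangent cone G(S) is Cohen–Macaulay if and only if the tangent cone G(S₁) is Cohen–Macaulay. -/

import Mathlib

open scoped Pointwise

/-- `S ⊆ ℕ` is a numerical semigroup: it contains `0`, is closed under
addition, and has finite complement in `ℕ`. -/
def IsNumSgp (S : Set ℕ) : Prop :=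
  (0 : ℕ) ∈ S ∧ (∀ a ∈ S, ∀ b ∈ S, a + b ∈ S) ∧ {x : ℕ | x ∉ S}.Finite

/-- `nM S t` is the `t`-fold sumset of the maximal ideal `M = S \ {0}`,
with the convention `nM S 0 = S`. -/
def nM (S : Set ℕ) : ℕ → Set ℕ
  | 0 => S
  | t + 1 => (S \ {0}) + nM S t

/-- the order of `s` with respect to `S` : the largest `t` with `s ∈ tM`. -/
noncomputable def ordS (S : Set ℕ) (s : ℕ) : ℕ := sSup {t : ℕ | s ∈ nM S t}

/-- the multiplicity of `S` : its least nonzero element. -/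
noncomputable def mult (S : Set ℕ) : ℕ := sInf {x : ℕ | x ∈ S ∧ x ≠ 0}

/-- the Apéry set of `S` with respect to `x` : elements `s ∈ S` with `s - x ∉ S`. -/
def Ap (S : Set ℕ) (x : ℕ) : Set ℕ := {s : ℕ | s ∈ S ∧ ¬ ∃ t ∈ S, s = t + x}

/-- membership of an integer in (the image in `ℤ` of) `S`. -/
def zmem (S : Set ℕ) (z : ℤ) : Prop := ∃ t ∈ S, (t : ℤ) = z

/-- the Frobenius number of `S` : the largest integer not in `S`. -/
noncomputable def Frob (S : Set ℕ) : ℤ := sSup {z : ℤ | ¬ zmem S z}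

/-- `S` is symmetric: for every integer `z`, `z ∈ S` iff `F(S) - z ∉ S`. -/
def IsSymmetric (S : Set ℕ) : Prop := ∀ z : ℤ, zmem S z ↔ ¬ zmem S (Frob S - z)

/-- the set of maximal elements of `Ap S x` with respect to the order
`u ⪯ v` iff `v = u + z` for some `z ∈ S`. -/
def MaxAp (S : Set ℕ) (x : ℕ) : Set ℕ :=
  {w : ℕ | w ∈ Ap S x ∧ ∀ y ∈ Ap S x, (∃ z ∈ S, y = w + z) → y = w}

/-- the set of maximal elements of `Ap S x` with respect to the order
`u ⪯_M v` iff `v = u + z` for some `z ∈ S` with `ord(v) = ord(u) + ord(z)`. -/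
def MaxMAp (S : Set ℕ) (x : ℕ) : Set ℕ :=
  {w : ℕ | w ∈ Ap S x ∧ ∀ y ∈ Ap S x,
    (∃ z ∈ S, y = w + z ∧ ordS S y = ordS S w + ordS S z) → y = w}

/-- `S` is M-pure with respect to `x` : all maximal elements of `Ap S x`
under `⪯_M` have the same order. -/
def MPureWrt (S : Set ℕ) (x : ℕ) : Prop :=
  ∀ w ∈ MaxMAp S x, ∀ w' ∈ MaxMAp S x, ordS S w = ordS S w'

/-- `S` is M-pure : it is M-pure with respect to its multiplicity. -/
def MPure (S : Set ℕ) : Prop := MPureWrt S (mult S)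

/-- `β_i(x)` : the number of elements of `Ap S x` of order `i`. -/
noncomputable def betaS (S : Set ℕ) (x i : ℕ) : ℕ := {w ∈ Ap S x | ordS S w = i}.ncard

/-- `d(x)` : the maximal order of an element of `Ap S x`. -/
noncomputable def dS (S : Set ℕ) (x : ℕ) : ℕ := sSup (ordS S '' Ap S x)

/-- the reduction number of `S` : the least `r` with `(r+1)M = m(S) + rM`. -/
noncomputable def redNum (S : Set ℕ) : ℕ :=
  sInf {r : ℕ | nM S (r + 1) = (fun y => mult S + y) '' nM S r}

/-- `l_x(S) = max { ord(s+x) - ord(x) - ord(s) : s ∈ S, ord(s) ≤ r }`. -/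
noncomputable def lS (S : Set ℕ) (x : ℕ) : ℕ :=
  sSup {t : ℕ | ∃ s ∈ S, ordS S s ≤ redNum S ∧ t = ordS S (s + x) - ordS S x - ordS S s}

/-- the Hilbert function of `S`. -/
noncomputable def HilbS (S : Set ℕ) (t : ℕ) : ℕ := (nM S t \ nM S (t + 1)).ncard

/-- The data of a gluing `S = ⟨q m₁, …, q m_d, p n₁, …, p n_k⟩` of two numerical
semigroups `S₁ = ⟨m₁, …, m_d⟩` and `S₂ = ⟨n₁, …, n_k⟩`, minimally generated by
`m₁ < ⋯ < m_d` and `n₁ < ⋯ < n_k`, where `p ∈ S₁ \ {m₁, …, m_d}`,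
`q ∈ S₂ \ {n₁, …, n_k}` and `gcd(p, q) = 1`. -/
structure Gluing where
  d : ℕ
  k : ℕ
  hd : 0 < d
  hk : 0 < k
  m : Fin d → ℕ
  n : Fin k → ℕ
  p : ℕ
  q : ℕ
  hm : StrictMono m
  hn : StrictMono n
  hmin₁ : ∀ i, m i ∉ AddSubmonoid.closure (Set.range m \ {m i})
  hmin₂ : ∀ j, n j ∉ AddSubmonoid.closure (Set.range n \ {n j})
  hnum₁ : IsNumSgp (AddSubmonoid.closure (Set.range m) : Set ℕ)
  hnum₂ : IsNumSgp (AddSubmonoid.closure (Set.range n) : Set ℕ)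
  hp : p ∈ AddSubmonoid.closure (Set.range m)
  hq : q ∈ AddSubmonoid.closure (Set.range n)
  hpm : p ∉ Set.range m
  hqn : q ∉ Set.range n
  hpq : Nat.gcd p q = 1

/-- the numerical semigroup `S₁ = ⟨m₁, …, m_d⟩`. -/
def Gluing.S₁ (G : Gluing) : Set ℕ := (AddSubmonoid.closure (Set.range G.m) : Set ℕ)

/-- the numerical semigroup `S₂ = ⟨n₁, …, n_k⟩`. -/
def Gluing.S₂ (G : Gluing) : Set ℕ := (AddSubmonoid.closure (Set.range G.n) : Set ℕ)

/-- the glued numerical semigroup `S = ⟨q m₁, …, q m_d, p n₁, …, p n_k⟩`. -/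
def Gluing.S (G : Gluing) : Set ℕ :=
  (AddSubmonoid.closure
    ((fun x => G.q * x) '' Set.range G.m ∪ (fun x => G.p * x) '' Set.range G.n) : Set ℕ)

/-- the smallest generator `m₁` of `S₁`. -/
def Gluing.m₁ (G : Gluing) : ℕ := G.m ⟨0, G.hd⟩

/-- the smallest generator `n₁` of `S₂`. -/
def Gluing.n₁ (G : Gluing) : ℕ := G.n ⟨0, G.hk⟩

/-- the gluing is specific if `ord_{S₂}(q) + l_q(S₂) ≤ ord_{S₁}(p)`. -/
def Gluing.Specific (G : Gluing) : Prop := ordS G.S₂ G.q + lS G.S₂ G.q ≤ ordS G.S₁ G.p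

/-- the gluing is nice if `q = a n₁` for some `1 < a ≤ ord_{S₁}(p)`. -/
def Gluing.Nice (G : Gluing) : Prop := ∃ a : ℕ, 1 < a ∧ a ≤ ordS G.S₁ G.p ∧ G.q = a * G.n₁


/-!
Every `s ∈ S` can be written `s = q a + p b` with `a ∈ S₁` and `b` in the Apéry set of `q` in
`S₂`, and any other writing `s = q a' + p b'` has `b' = b + t q`, `a = a' + t p`. Since
`ord(y + x) ≤ ord y + ord x + l_x` (reduce `y` below the reduction number by removing copies of the
multiplicity), specificity gives `ord_{S₂}(b') ≤ ord_{S₂}(b) + t ord_{S₁}(p)` and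
`ord_{S₁}(a') + t ord_{S₁}(p) ≤ ord_{S₁}(a)`, so the order is additive on such writings:
`ord_S(q a + p b) = ord_{S₁}(a) + ord_{S₂}(b)`. Adding `q m₁` only replaces `a` by `a + m₁`.
-/

section Order

variable {S : AddSubmonoid ℕ} {s x y : ℕ} {t u : ℕ}

lemma mem_nM_succ_iff : x ∈ nM S (t + 1) ↔ ∃ m ∈ S, m ≠ 0 ∧ ∃ y ∈ nM S t, m + y = x := by
  simp [nM, Set.mem_add, and_assoc]

lemma add_mem_nM (hs : s ∈ S) (hx : x ∈ nM S t) : s + x ∈ nM S t := by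
  induction t generalizing x with
  | zero => exact add_mem hs hx
  | succ t ih =>
    obtain ⟨m, hm, hm0, y, hy, rfl⟩ := mem_nM_succ_iff.1 hx
    exact mem_nM_succ_iff.2 ⟨m, hm, hm0, s + y, ih hy, by ring⟩

lemma nM_subset : nM S t ⊆ S := by
  intro x hx
  induction t generalizing x with
  | zero => exact hx
  | succ t ih =>
    obtain ⟨m, hm, -, y, hy, rfl⟩ := mem_nM_succ_iff.1 hx
    exact add_mem hm (ih hy)

lemma nM_antitone : Antitone (nM (S : Set ℕ)) :=
  antitone_nat_of_succ_le fun t x hx => by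
    obtain ⟨m, hm, -, y, hy, rfl⟩ := mem_nM_succ_iff.1 hx
    exact add_mem_nM hm hy

lemma add_mem_nM_add (hx : x ∈ nM S t) (hy : y ∈ nM S u) : x + y ∈ nM S (t + u) := by
  induction t generalizing x with
  | zero => simpa using add_mem_nM (nM_subset hx) hy
  | succ t ih =>
    obtain ⟨m, hm, hm0, x', hx', rfl⟩ := mem_nM_succ_iff.1 hx
    rw [Nat.add_right_comm]
    exact mem_nM_succ_iff.2 ⟨m, hm, hm0, x' + y, ih hx', by ring⟩

lemma le_of_mem_nM (hx : x ∈ nM S t) : t ≤ x := by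
  induction t generalizing x with
  | zero => exact Nat.zero_le x
  | succ t ih =>
    obtain ⟨m, -, hm0, y, hy, rfl⟩ := mem_nM_succ_iff.1 hx
    have := ih hy
    omega

lemma bddAbove_setOf_mem_nM : BddAbove {t | x ∈ nM S t} :=
  ⟨x, fun _ => le_of_mem_nM⟩

lemma mem_nM_ordS (hx : x ∈ S) : x ∈ nM S (ordS S x) :=
  Nat.sSup_mem ⟨0, hx⟩ bddAbove_setOf_mem_nM

lemma le_ordS (hx : x ∈ nM S t) : t ≤ ordS S x :=
  le_csSup bddAbove_setOf_mem_nM hx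

lemma ordS_le_self (hx : x ∈ S) : ordS S x ≤ x :=
  le_of_mem_nM (mem_nM_ordS hx)

lemma ordS_zero : ordS S 0 = 0 :=
  Nat.le_zero.1 (ordS_le_self S.zero_mem)

lemma one_le_ordS (hx : x ∈ S) (hx0 : x ≠ 0) : 1 ≤ ordS S x :=
  le_ordS (mem_nM_succ_iff.2 ⟨x, hx, hx0, 0, S.zero_mem, add_zero x⟩)

lemma ordS_add_ordS_le (hx : x ∈ S) (hy : y ∈ S) : ordS S x + ordS S y ≤ ordS S (x + y) :=
  le_ordS (add_mem_nM_add (mem_nM_ordS hx) (mem_nM_ordS hy))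

lemma mul_ordS_le (hx : x ∈ S) (t : ℕ) : t * ordS S x ≤ ordS S (t * x) := by
  induction t with
  | zero => simp
  | succ t ih =>
    have := ordS_add_ordS_le (nsmul_mem hx t) hx
    simp only [smul_eq_mul] at this
    rw [Nat.succ_mul, Nat.succ_mul]
    omega

end Order

section ReductionNumber

variable {S : AddSubmonoid ℕ} {s x y : ℕ} {t : ℕ}

lemma mult_le (hx : x ∈ S) (hx0 : x ≠ 0) : mult S ≤ x :=
  Nat.sInf_le ⟨hx, hx0⟩

/-- Either a copy of the multiplicity splits off, or all `t + 1` summands exceed it. -/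
lemma sub_mult_mem_nM_or_le (hx : x ∈ nM S (t + 1)) :
    (mult S ≤ x ∧ x - mult S ∈ nM S t) ∨ (t + 1) * (mult S + 1) ≤ x := by
  induction t generalizing x with
  | zero =>
    obtain ⟨m, hm, hm0, y, hy, rfl⟩ := mem_nM_succ_iff.1 hx
    obtain rfl | hm_gt := eq_or_lt_of_le (mult_le hm hm0)
    · exact .inl ⟨by omega, by simpa using hy⟩
    · exact .inr (by omega)
  | succ t ih =>
    obtain ⟨m, hm, hm0, y, hy, rfl⟩ := mem_nM_succ_iff.1 hx
    obtain rfl | hm_gt := eq_or_lt_of_le (mult_le hm hm0)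
    · exact .inl ⟨by omega, by simpa using hy⟩
    rcases ih hy with ⟨hy_ge, hy'⟩ | hy_ge
    · exact .inl ⟨by omega, mem_nM_succ_iff.2 ⟨m, hm, hm0, y - mult S, hy', by omega⟩⟩
    · rw [Nat.succ_mul]
      omega

variable (hfin : (S : Set ℕ)ᶜ.Finite)
include hfin

lemma exists_conductor : ∃ c, ∀ x, c ≤ x → x ∈ S := by
  obtain ⟨B, hB⟩ := hfin.bddAbove
  refine ⟨B + 1, fun x hx => ?_⟩
  by_contra hxS
  have := hB hxS
  omega

lemma mult_mem_and_ne_zero : mult S ∈ S ∧ mult S ≠ 0 := by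
  obtain ⟨c, hc⟩ := exists_conductor hfin
  exact Nat.sInf_mem (s := {x | x ∈ (S : Set ℕ) ∧ x ≠ 0}) ⟨c + 1, hc _ (by omega), by omega⟩

lemma mul_mult_mem_nM (t : ℕ) : t * mult S ∈ nM S t := by
  induction t with
  | zero => rw [zero_mul]; exact S.zero_mem
  | succ t ih =>
    obtain ⟨he, he0⟩ := mult_mem_and_ne_zero hfin
    exact mem_nM_succ_iff.2 ⟨mult S, he, he0, t * mult S, ih, by ring⟩

lemma add_ordS_le_ordS_mul_mult_add (hy : y ∈ S) (t : ℕ) :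
    t + ordS S y ≤ ordS S (t * mult S + y) :=
  le_ordS (add_mem_nM_add (mul_mult_mem_nM hfin t) (mem_nM_ordS hy))

lemma redNum_spec : nM S (redNum S + 1) = (fun y => mult S + y) '' nM S (redNum S) := by
  obtain ⟨he, he0⟩ := mult_mem_and_ne_zero hfin
  obtain ⟨c, hc⟩ := exists_conductor hfin
  refine Nat.sInf_mem (s := {r | nM S (r + 1) = (fun y => mult S + y) '' nM S r})
    ⟨c, Set.Subset.antisymm (fun x hx => ?_) ?_⟩
  · rcases sub_mult_mem_nM_or_le hx with ⟨hex, hx'⟩ | hx_ge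
    · exact ⟨x - mult S, hx', by simp only; omega⟩
    -- all summands exceed `mult S`, so `x - (c + 1) * mult S` lies beyond the conductor
    have hexp : (c + 1) * (mult S + 1) = c * mult S + mult S + c + 1 := by ring
    refine ⟨(x - (c + 1) * mult S) + c * mult S,
      add_mem_nM (hc _ (by rw [Nat.succ_mul]; omega)) (mul_mult_mem_nM hfin c), ?_⟩
    simp only
    rw [Nat.succ_mul]
    omega
  · rintro _ ⟨y, hy, rfl⟩
    exact mem_nM_succ_iff.2 ⟨mult S, he, he0, y, hy, rfl⟩

lemma exists_eq_mul_mult_add_of_mem_nM (hx : x ∈ nM S (redNum S + t)) :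
    ∃ y ∈ nM S (redNum S), x = t * mult S + y := by
  induction t generalizing x with
  | zero => exact ⟨x, hx, by simp⟩
  | succ t ih =>
    obtain ⟨m, hm, hm0, y, hy, rfl⟩ := mem_nM_succ_iff.1 hx
    obtain ⟨z, hz, rfl⟩ := ih hy
    have hmz : m + z ∈ nM S (redNum S + 1) := mem_nM_succ_iff.2 ⟨m, hm, hm0, z, hz, rfl⟩
    rw [redNum_spec hfin] at hmz
    obtain ⟨z', hz', hz'_eq⟩ := hmz
    refine ⟨z', hz', ?_⟩
    simp only at hz'_eq
    rw [Nat.succ_mul]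
    omega

lemma bddAbove_lS_set (hx : x ∈ S) : BddAbove {l | ∃ s ∈ S, ordS S s ≤ redNum S ∧
    l = ordS S (s + x) - ordS S x - ordS S s} := by
  obtain ⟨c, hc⟩ := exists_conductor hfin
  refine ⟨c + (redNum S + 1) * mult S + x, ?_⟩
  rintro _ ⟨s, hs, hs_ord, rfl⟩
  have hs_le : s < c + (redNum S + 1) * mult S := by
    by_contra! hs_ge
    have h := add_ordS_le_ordS_mul_mult_add hfin (hc (s - (redNum S + 1) * mult S) (by omega))
      (redNum S + 1)
    rw [Nat.add_sub_cancel' (by omega)] at h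
    omega
  have := ordS_le_self (add_mem hs hx)
  omega

lemma sub_le_lS (hx : x ∈ S) (hs : s ∈ S) (hs_ord : ordS S s ≤ redNum S) :
    ordS S (s + x) - ordS S x - ordS S s ≤ lS S x :=
  le_csSup (bddAbove_lS_set hfin hx) ⟨s, hs, hs_ord, rfl⟩

/-- Above the reduction number every element is a multiple of `mult S` plus an element of order
`redNum S`, which reduces the bound to the elements that define `lS`. -/
lemma ordS_add_le (hs : s ∈ S) (hx : x ∈ S) :
    ordS S (s + x) ≤ ordS S s + ordS S x + lS S x := by
  set r := redNum S
  have h_super := ordS_add_ordS_le hs hx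
  by_cases hs_ord : ordS S s ≤ r
  · have := sub_le_lS hfin hx hs hs_ord
    omega
  set u := ordS S s
  set w := ordS S (s + x)
  obtain ⟨s₀, hs₀, hs_eq⟩ := exists_eq_mul_mult_add_of_mem_nM hfin
    (nM_antitone (by omega : r + (u - r) ≤ u) (mem_nM_ordS hs))
  obtain ⟨z, hz, hsx_eq⟩ := exists_eq_mul_mult_add_of_mem_nM hfin
    (nM_antitone (by omega : r + (w - r) ≤ w) (mem_nM_ordS (add_mem hs hx)))
  have hs₀S := nM_subset hs₀
  have hs₀_ord : ordS S s₀ ≤ r := by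
    have := add_ordS_le_ordS_mul_mult_add hfin hs₀S (u - r)
    rw [← hs_eq] at this
    omega
  have hs₀x_eq : s₀ + x = (w - u) * mult S + z := by
    have : (w - r) * mult S = (u - r) * mult S + (w - u) * mult S := by
      rw [← Nat.add_mul]; congr 1; omega
    omega
  have hs₀x_ord : (w - u) + r ≤ ordS S (s₀ + x) := by
    have := add_ordS_le_ordS_mul_mult_add hfin (nM_subset hz) (w - u)
    have := le_ordS hz
    rw [hs₀x_eq]
    omega
  have := sub_le_lS hfin hx hs₀S hs₀_ord
  omega

lemma ordS_add_mul_le (hs : s ∈ S) (hx : x ∈ S) (t : ℕ) :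
    ordS S (s + t * x) ≤ ordS S s + t * (ordS S x + lS S x) := by
  induction t with
  | zero => simp
  | succ t ih =>
    have := ordS_add_le hfin (add_mem hs (nsmul_mem hx t)) hx
    simp only [smul_eq_mul] at this
    rw [Nat.succ_mul, ← add_assoc, Nat.succ_mul]
    omega

end ReductionNumber

section Apery

variable {S : AddSubmonoid ℕ} {s x : ℕ}

lemma zero_mem_Ap (hx : 0 < x) : 0 ∈ Ap S x :=
  ⟨S.zero_mem, fun ⟨t, _, ht⟩ => by omega⟩

lemma exists_mem_Ap_add_mul (hx : 0 < x) (hs : s ∈ S) : ∃ w ∈ Ap S x, ∃ t, s = w + t * x := by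
  induction s using Nat.strong_induction_on with
  | _ s ih =>
    by_cases hAp : ∃ s' ∈ S, s = s' + x
    · obtain ⟨s', hs', rfl⟩ := hAp
      obtain ⟨w, hw, t, rfl⟩ := ih s' (by omega) hs'
      exact ⟨w, hw, t + 1, by ring⟩
    · exact ⟨s, ⟨hs, hAp⟩, 0, by ring⟩

end Apery

lemma mul_mem_nM_of_mul_mem {S U : AddSubmonoid ℕ} {c a t : ℕ} (hc : c ≠ 0)
    (hSU : ∀ a ∈ S, c * a ∈ U) (ha : a ∈ nM S t) : c * a ∈ nM U t := by
  induction t generalizing a with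
  | zero => exact hSU a ha
  | succ t ih =>
    obtain ⟨m, hm, hm0, a', ha', rfl⟩ := mem_nM_succ_iff.1 ha
    exact mem_nM_succ_iff.2 ⟨c * m, hSU m hm, mul_ne_zero hc hm0, c * a', ih ha', by ring⟩

lemma ordS_le_ordS_mul {S U : AddSubmonoid ℕ} {c a : ℕ} (hc : c ≠ 0)
    (hSU : ∀ a ∈ S, c * a ∈ U) (ha : a ∈ S) : ordS S a ≤ ordS U (c * a) :=
  le_ordS (mul_mem_nM_of_mul_mem hc hSU (mem_nM_ordS ha))

lemma Nat.one_mem_of_one_mem_addSubmonoidClosure {A : Set ℕ}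
    (h : 1 ∈ AddSubmonoid.closure A) : 1 ∈ A := by
  refine AddSubmonoid.closure_induction (motive := fun x _ => x = 1 → x ∈ A)
    (fun x hx _ => hx) (fun h => absurd h zero_ne_one) (fun x y _ _ hx hy hxy => ?_) h rfl
  rcases Nat.add_eq_one_iff.1 hxy with ⟨rfl, rfl⟩ | ⟨rfl, rfl⟩
  · simpa using hy rfl
  · simpa using hx rfl

namespace Gluing

variable (G : Gluing)

lemma q_pos : 0 < G.q := by
  refine Nat.pos_of_ne_zero fun hq => G.hpm ?_
  have hp : G.p = 1 := by simpa [hq] using G.hpq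
  exact hp ▸ Nat.one_mem_of_one_mem_addSubmonoidClosure (hp ▸ G.hp)

lemma p_pos : 0 < G.p := by
  refine Nat.pos_of_ne_zero fun hp => G.hqn ?_
  have hq : G.q = 1 := by simpa [hp] using G.hpq
  exact hq ▸ Nat.one_mem_of_one_mem_addSubmonoidClosure (hq ▸ G.hq)

lemma mem_S_iff {s : ℕ} : s ∈ G.S ↔ ∃ a ∈ G.S₁, ∃ b ∈ G.S₂, G.q * a + G.p * b = s := by
  change s ∈ AddSubmonoid.closure
    (AddMonoidHom.mulLeft G.q '' Set.range G.m ∪ AddMonoidHom.mulLeft G.p '' Set.range G.n) ↔ _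
  rw [AddSubmonoid.closure_union, ← AddMonoidHom.map_mclosure, ← AddMonoidHom.map_mclosure,
    AddSubmonoid.mem_sup]
  simp only [AddSubmonoid.mem_map, AddMonoidHom.coe_mulLeft]
  constructor
  · rintro ⟨_, ⟨a, ha, rfl⟩, _, ⟨b, hb, rfl⟩, rfl⟩
    exact ⟨a, ha, b, hb, rfl⟩
  · rintro ⟨a, ha, b, hb, rfl⟩
    exact ⟨_, ⟨a, ha, rfl⟩, _, ⟨b, hb, rfl⟩, rfl⟩

lemma q_mul_mem {a : ℕ} (ha : a ∈ G.S₁) : G.q * a ∈ G.S :=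
  G.mem_S_iff.2 ⟨a, ha, 0, zero_mem _, by ring⟩

lemma p_mul_mem {b : ℕ} (hb : b ∈ G.S₂) : G.p * b ∈ G.S :=
  G.mem_S_iff.2 ⟨0, zero_mem _, b, hb, by ring⟩

lemma exists_rep_of_mem_nM {s w : ℕ} (hs : s ∈ nM G.S w) :
    ∃ a ∈ G.S₁, ∃ b ∈ G.S₂, G.q * a + G.p * b = s ∧ w ≤ ordS G.S₁ a + ordS G.S₂ b := by
  induction w generalizing s with
  | zero =>
    obtain ⟨a, ha, b, hb, rfl⟩ := G.mem_S_iff.1 hs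
    exact ⟨a, ha, b, hb, rfl, Nat.zero_le _⟩
  | succ w ih =>
    obtain ⟨m, hm, hm0, y, hy, rfl⟩ := mem_nM_succ_iff.1 hs
    obtain ⟨α, hα, β, hβ, rfl⟩ := G.mem_S_iff.1 hm
    obtain ⟨a, ha, b, hb, rfl, hw⟩ := ih hy
    have hαβ : 1 ≤ ordS G.S₁ α + ordS G.S₂ β := by
      rcases Nat.eq_zero_or_pos α with rfl | hα0
      · have hβ0 : β ≠ 0 := by rintro rfl; simp at hm0
        have : 1 ≤ ordS G.S₂ β := one_le_ordS hβ hβ0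
        omega
      · have : 1 ≤ ordS G.S₁ α := one_le_ordS hα hα0.ne'
        omega
    have h₁ : ordS G.S₁ α + ordS G.S₁ a ≤ ordS G.S₁ (α + a) := ordS_add_ordS_le hα ha
    have h₂ : ordS G.S₂ β + ordS G.S₂ b ≤ ordS G.S₂ (β + b) := ordS_add_ordS_le hβ hb
    exact ⟨α + a, add_mem hα ha, β + b, add_mem hβ hb, by ring, by omega⟩

lemma exists_eq_add_mul_of_rep_eq {a a' b b' : ℕ} (hb : b ∈ Ap G.S₂ G.q) (hb' : b' ∈ G.S₂)
    (h : G.q * a + G.p * b = G.q * a' + G.p * b') :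
    ∃ t, b' = b + t * G.q ∧ a = a' + t * G.p := by
  have hZ : (G.q : ℤ) * (a - a') = G.p * (b' - b) := by
    have := congrArg (Nat.cast : ℕ → ℤ) h
    push_cast at this
    linear_combination this
  obtain ⟨t, ht⟩ : (G.q : ℤ) ∣ b' - b := by
    refine Int.dvd_of_dvd_mul_right_of_gcd_one ⟨_, hZ.symm⟩ ?_
    rw [Int.gcd_natCast_natCast, Nat.gcd_comm, G.hpq]
  rcases lt_or_ge t 0 with ht_neg | ht_nonneg
  · -- then `b - q ∈ S₂`, against `b ∈ Ap S₂ q`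
    obtain ⟨n, rfl⟩ : ∃ n : ℕ, t = -(n + 1 : ℕ) := ⟨t.natAbs - 1, by omega⟩
    refine absurd ⟨b' + n * G.q, add_mem hb' (nsmul_mem G.hq n), ?_⟩ hb.2
    zify
    push_cast at ht
    linear_combination -ht
  · lift t to ℕ using ht_nonneg
    refine ⟨t, by zify; linear_combination ht, ?_⟩
    have : (G.q : ℤ) * (a - (a' + t * G.p)) = 0 := by linear_combination hZ + G.p * ht
    have := (mul_eq_zero.1 this).resolve_left (by exact_mod_cast G.q_pos.ne')
    omega

theorem ordS_q_mul_add_p_mul (hG : G.Specific) {a b : ℕ} (ha : a ∈ G.S₁)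
    (hb : b ∈ Ap G.S₂ G.q) : ordS G.S (G.q * a + G.p * b) = ordS G.S₁ a + ordS G.S₂ b := by
  refine le_antisymm ?_ ?_
  · have hs : G.q * a + G.p * b ∈ nM G.S (ordS G.S (G.q * a + G.p * b)) :=
      mem_nM_ordS (add_mem (G.q_mul_mem ha) (G.p_mul_mem hb.1))
    obtain ⟨a', ha', b', hb', h_eq, h_ord⟩ := G.exists_rep_of_mem_nM hs
    obtain ⟨t, rfl, rfl⟩ := G.exists_eq_add_mul_of_rep_eq hb hb' h_eq.symm
    have hb'_ord : ordS G.S₂ (b + t * G.q) ≤ ordS G.S₂ b + t * (ordS G.S₂ G.q + lS G.S₂ G.q) :=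
      ordS_add_mul_le G.hnum₂.2.2 hb.1 G.hq t
    have hp_ord : t * ordS G.S₁ G.p ≤ ordS G.S₁ (t * G.p) := mul_ordS_le G.hp t
    have ha_ord : ordS G.S₁ a' + ordS G.S₁ (t * G.p) ≤ ordS G.S₁ (a' + t * G.p) :=
      ordS_add_ordS_le ha' (nsmul_mem G.hp t)
    have h_spec : t * (ordS G.S₂ G.q + lS G.S₂ G.q) ≤ t * ordS G.S₁ G.p := Nat.mul_le_mul_left t hG
    omega
  · calc ordS G.S₁ a + ordS G.S₂ b ≤ ordS G.S (G.q * a) + ordS G.S (G.p * b) :=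
          add_le_add (ordS_le_ordS_mul G.q_pos.ne' (fun _ => G.q_mul_mem) ha)
            (ordS_le_ordS_mul G.p_pos.ne' (fun _ => G.p_mul_mem) hb.1)
      _ ≤ ordS G.S (G.q * a + G.p * b) := ordS_add_ordS_le (G.q_mul_mem ha) (G.p_mul_mem hb.1)

lemma ordS_q_mul (hG : G.Specific) {a : ℕ} (ha : a ∈ G.S₁) : ordS G.S (G.q * a) = ordS G.S₁ a := by
  have h₀ : ordS G.S₂ 0 = 0 := ordS_zero
  simpa [h₀] using G.ordS_q_mul_add_p_mul hG ha (zero_mem_Ap G.q_pos)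

lemma exists_rep_Ap {s : ℕ} (hs : s ∈ G.S) :
    ∃ a ∈ G.S₁, ∃ b ∈ Ap G.S₂ G.q, s = G.q * a + G.p * b := by
  obtain ⟨a₀, ha₀, b₀, hb₀, rfl⟩ := G.mem_S_iff.1 hs
  obtain ⟨b, hb, t, rfl⟩ := exists_mem_Ap_add_mul G.q_pos hb₀
  exact ⟨a₀ + t * G.p, add_mem ha₀ (nsmul_mem G.hp t), b, hb, by ring⟩

lemma m₁_mem : G.m₁ ∈ G.S₁ :=
  AddSubmonoid.subset_closure ⟨_, rfl⟩

end Gluing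

/-- for a specific gluing `S` of `S₁` and `S₂`,
`ord_S(s + qm₁) = ord_S(s) + 1` for all `s ∈ S` iff
`ord_{S₁}(s + m₁) = ord_{S₁}(s) + 1` for all `s ∈ S₁`; equivalently (by García's
criterion) `G(S)` is Cohen–Macaulay iff `G(S₁)` is Cohen–Macaulay. -/
theorem stmt15 (G : Gluing) (hG : G.Specific) :
    (∀ s ∈ G.S, ordS G.S (s + G.q * G.m₁) = ordS G.S s + 1) ↔
      (∀ s ∈ G.S₁, ordS G.S₁ (s + G.m₁) = ordS G.S₁ s + 1) := by
  constructor
  · intro hS a ha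
    rw [← G.ordS_q_mul hG ha, ← G.ordS_q_mul hG (add_mem ha G.m₁_mem), mul_add]
    exact hS _ (G.q_mul_mem ha)
  · intro hS₁ s hs
    obtain ⟨a, ha, b, hb, rfl⟩ := G.exists_rep_Ap hs
    rw [show G.q * a + G.p * b + G.q * G.m₁ = G.q * (a + G.m₁) + G.p * b by ring,
      G.ordS_q_mul_add_p_mul hG (add_mem ha G.m₁_mem) hb, G.ordS_q_mul_add_p_mul hG ha hb, hS₁ a ha]
    ring
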